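/- Let r, λ ∈ ℕ, p a prime, and for real x with |x| < 1 set T_r(x, λ) = Σ_{j ≥ λ} d_r(p^j) x^j. Then (1 − x)^r T_r(x, λ) = λ d_r(p^λ) ∫₀^x t^{λ−1} (1 − t)^{r−1} dt. Equivalently, (1 − x)^r T_r(x, λ) = d_r(p^λ) x^λ H_{λ,r}(x), where H_{λ,r}(x) = λ x^{−λ} ∫₀^x t^{λ−1}(1−t)^{r−1} dt is a polynomial of degree r with H_{λ,r}(0) = 1. -/

import Mathlib

/-!
Since `d_r(p^j) = C(j + r - 1, r - 1)`, the full series `Σ_j d_r(p^j) x^j` is `(1 - x)^(-r)`,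
so `(1 - x)^r T_r(x, λ) = 1 - (1 - x)^r P(x)` with `P` the partial sum over `j < λ`. This
vanishes at `0`, and a telescoping identity between the coefficients of `P` and of `P'` shows
that its derivative is `λ d_r(p^λ) x^(λ-1) (1 - x)^(r-1)`. Expanding `(1 - t)^(r-1)` binomially
and integrating termwise exhibits `λ x^(-λ) ∫₀^x t^(λ-1) (1 - t)^(r-1) dt` as a polynomial of
degree `< r`.
-/

open Finset

noncomputable section

/-- `dr r n` is the `r`-fold divisor function `d_r(n)`. -/
def dr : ℕ → ℕ → ℕ
  | 0, n => if n = 1 then 1 else 0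
  | r + 1, n => ∑ d ∈ n.divisors, dr r d

theorem dr_succ_prime_pow {p : ℕ} (hp : p.Prime) (r j : ℕ) :
    dr (r + 1) (p ^ j) = (j + r).choose r := by
  induction r generalizing j with
  | zero => simp [dr, hp.ne_zero]
  | succ r ih =>
    rw [dr, Nat.sum_divisors_prime_pow hp]
    simp only [ih, Nat.sum_range_add_choose, add_assoc]

theorem tsum_ite_le_eq_tsum_sub_sum {G : Type*} [AddCommGroup G] [TopologicalSpace G]
    [IsTopologicalAddGroup G] [T2Space G] {f : ℕ → G} (hf : Summable f) (m : ℕ) :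
    ∑' j, (if m ≤ j then f j else 0) = ∑' j, f j - ∑ j ∈ range m, f j := by
  have hhead : ∀ j ∉ range m, (if j < m then f j else 0) = 0 := fun j hj => by simp_all
  have hsplit : (fun j => if m ≤ j then f j else 0) =
      fun j => f j - if j < m then f j else 0 := by
    ext j
    split_ifs <;> first | omega | simp
  rw [hsplit, hf.tsum_sub (summable_of_ne_finset_zero hhead), tsum_eq_sum hhead]
  exact congrArg _ (sum_congr rfl fun j hj => if_pos (mem_range.mp hj))

theorem one_sub_pow_mul_tsum_choose_mul_pow {x : ℝ} (hx : |x| < 1) (s : ℕ) :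
    (1 - x) ^ (s + 1) * ∑' j : ℕ, ((j + s).choose s : ℝ) * x ^ j = 1 := by
  have h1x : (1 - x) ^ (s + 1) ≠ 0 := pow_ne_zero _ (by linarith [(abs_lt.mp hx).2])
  rw [tsum_choose_mul_geometric_of_norm_lt_one s (by rwa [Real.norm_eq_abs]),
    mul_one_div_cancel h1x]

/-- The left side is `(s + 1) P(t) - (1 - t) P'(t)` for the partial sum `P`, so this says
`((1 - t)^(s+1) P(t))' = -(m + 1) C(m + 1 + s, s) t^m (1 - t)^s`. -/
theorem sum_choose_mul_pow_telescope (m s : ℕ) (t : ℝ) :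
    (s + 1 : ℝ) * ∑ j ∈ range (m + 1), ((j + s).choose s : ℝ) * t ^ j
      - (1 - t) * ∑ j ∈ range (m + 1), ((j + s).choose s : ℝ) * (j * t ^ (j - 1))
      = (m + 1) * ((m + 1 + s).choose s : ℝ) * t ^ m := by
  induction m with
  | zero => simp [add_comm 1 s]
  | succ m ih =>
    have hcoeff : ((m + 1 + s).choose s : ℝ) * (m + 1 + s + 1)
        = ((m + 1 + 1 + s).choose s : ℝ) * (m + 2) := by
      norm_cast
      rw [Nat.choose_mul_succ_eq, show m + 1 + s + 1 - s = m + 2 by omega, add_right_comm _ s]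
    rw [sum_range_succ, sum_range_succ (fun j => ((j + s).choose s : ℝ) * (j * t ^ (j - 1)))]
    simp only [Nat.add_sub_cancel] at ih ⊢
    push_cast at ih ⊢
    linear_combination ih + t ^ (m + 1) * hcoeff

theorem mul_integral_pow_mul_one_sub_pow (m s : ℕ) (x : ℝ) :
    (m + 1) * ((m + 1 + s).choose s : ℝ) * ∫ t in (0 : ℝ)..x, t ^ m * (1 - t) ^ s
      = 1 - (1 - x) ^ (s + 1) * ∑ j ∈ range (m + 1), ((j + s).choose s : ℝ) * x ^ j := by
  have hderiv : ∀ t, HasDerivAt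
      (fun y => 1 - (1 - y) ^ (s + 1) * ∑ j ∈ range (m + 1), ((j + s).choose s : ℝ) * y ^ j)
      ((m + 1) * ((m + 1 + s).choose s : ℝ) * (t ^ m * (1 - t) ^ s)) t := by
    intro t
    have hpoly := HasDerivAt.fun_sum (u := range (m + 1))
      fun j _ => (hasDerivAt_pow j t).const_mul ((j + s).choose s : ℝ)
    have hpow := ((hasDerivAt_id t).const_sub 1).fun_pow (s + 1)
    refine ((hpow.fun_mul hpoly).const_sub 1).congr_deriv ?_
    simp only [id, Nat.add_sub_cancel]
    push_cast
    linear_combination (1 - t) ^ s * sum_choose_mul_pow_telescope m s t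
  rw [← intervalIntegral.integral_const_mul,
    intervalIntegral.integral_eq_sub_of_hasDerivAt (fun t _ => hderiv t)
      (by apply Continuous.intervalIntegrable; fun_prop)]
  simp [sum_range_succ']

open Polynomial

theorem integral_pow_mul_one_sub_pow (m s : ℕ) (x : ℝ) :
    ∫ t in (0 : ℝ)..x, t ^ m * (1 - t) ^ s
      = ∑ k ∈ range (s + 1), (-1) ^ k * (s.choose k : ℝ) * x ^ (m + k + 1) / (m + k + 1) := by
  have hexpand : ∀ t : ℝ, t ^ m * (1 - t) ^ s
      = ∑ k ∈ range (s + 1), (-1) ^ k * (s.choose k : ℝ) * t ^ (m + k) := fun t => by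
    rw [sub_eq_neg_add, add_pow, mul_sum]
    refine sum_congr rfl fun k _ => ?_
    rw [neg_pow, pow_add]
    ring
  simp_rw [hexpand]
  rw [intervalIntegral.integral_finsetSum fun k _ => by
    apply Continuous.intervalIntegrable; fun_prop]
  refine sum_congr rfl fun k _ => ?_
  rw [intervalIntegral.integral_const_mul, integral_pow]
  push_cast
  ring

/-- The paper's `H_{m+1,s+1}`; see `pow_mul_eval_betaPoly`. -/
def betaPoly (m s : ℕ) : ℝ[X] :=
  ∑ k ∈ range (s + 1), C (((m : ℝ) + 1) * (-1) ^ k * s.choose k / (m + k + 1)) * X ^ k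

theorem eval_betaPoly (m s : ℕ) (x : ℝ) :
    (betaPoly m s).eval x =
      ∑ k ∈ range (s + 1), (m + 1) * (-1) ^ k * s.choose k / (m + k + 1) * x ^ k := by
  simp [betaPoly, eval_finsetSum]

theorem natDegree_betaPoly_le (m s : ℕ) : (betaPoly m s).natDegree ≤ s :=
  natDegree_sum_le_of_forall_le _ _ fun k hk =>
    (natDegree_C_mul_X_pow_le _ k).trans (Nat.lt_succ_iff.mp (mem_range.mp hk))

theorem eval_zero_betaPoly (m s : ℕ) : (betaPoly m s).eval 0 = 1 := by
  rw [eval_betaPoly, sum_range_succ']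
  simp [div_self (Nat.cast_add_one_ne_zero (R := ℝ) m)]

theorem pow_mul_eval_betaPoly (m s : ℕ) (x : ℝ) :
    x ^ (m + 1) * (betaPoly m s).eval x = (m + 1) * ∫ t in (0 : ℝ)..x, t ^ m * (1 - t) ^ s := by
  rw [eval_betaPoly, integral_pow_mul_one_sub_pow, mul_sum, mul_sum]
  refine sum_congr rfl fun k _ => ?_
  ring

/-- **Lemma 6** (Ng): for `r, λ ≥ 1` and `p` prime, with
`T_r(x,λ) = Σ_{j ≥ λ} d_r(p^j) x^j` (|x| < 1), one has
`(1-x)^r T_r(x,λ) = λ d_r(p^λ) ∫₀^x t^{λ-1}(1-t)^{r-1} dt`; equivalently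
`(1-x)^r T_r(x,λ) = d_r(p^λ) x^λ H_{λ,r}(x)` where
`H_{λ,r}(x) = λ x^{-λ} ∫₀^x t^{λ-1}(1-t)^{r-1} dt` is a polynomial (of degree at most `r`)
with `H_{λ,r}(0) = 1`. -/
theorem divisor_generating_function (r lam : ℕ) (hr : 1 ≤ r) (hlam : 1 ≤ lam)
    (p : ℕ) (hp : p.Prime) :
    (∀ x : ℝ, |x| < 1 →
      (1 - x) ^ r * (∑' j : ℕ, if lam ≤ j then (dr r (p ^ j) : ℝ) * x ^ j else 0) =
        lam * (dr r (p ^ lam) : ℝ) * ∫ t in (0:ℝ)..x, t ^ (lam - 1) * (1 - t) ^ (r - 1)) ∧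
    ∃ H : Polynomial ℝ,
      (∀ x : ℝ, x ≠ 0 →
        H.eval x = lam * x ^ (-(lam : ℤ)) * ∫ t in (0:ℝ)..x, t ^ (lam - 1) * (1 - t) ^ (r - 1)) ∧
      H.natDegree ≤ r ∧ H.eval 0 = 1 ∧
      ∀ x : ℝ, |x| < 1 →
        (1 - x) ^ r * (∑' j : ℕ, if lam ≤ j then (dr r (p ^ j) : ℝ) * x ^ j else 0) =
          (dr r (p ^ lam) : ℝ) * x ^ lam * H.eval x := by
  obtain ⟨s, rfl⟩ : ∃ s, r = s + 1 := ⟨r - 1, by omega⟩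
  obtain ⟨m, rfl⟩ : ∃ m, lam = m + 1 := ⟨lam - 1, by omega⟩
  simp only [Nat.add_sub_cancel, dr_succ_prime_pow hp, zpow_neg, zpow_natCast]
  push_cast
  have hT : ∀ x : ℝ, |x| < 1 →
      (1 - x) ^ (s + 1) * (∑' j : ℕ, if m + 1 ≤ j then ((j + s).choose s : ℝ) * x ^ j else 0) =
        (m + 1) * ((m + 1 + s).choose s : ℝ) * ∫ t in (0 : ℝ)..x, t ^ m * (1 - t) ^ s := by
    intro x hx
    rw [tsum_ite_le_eq_tsum_sub_sum
        (summable_choose_mul_geometric_of_norm_lt_one s (r := x) (by rwa [Real.norm_eq_abs])),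
      mul_sub, one_sub_pow_mul_tsum_choose_mul_pow hx, mul_integral_pow_mul_one_sub_pow]
  refine ⟨hT, betaPoly m s, fun x hx => ?_, (natDegree_betaPoly_le m s).trans s.le_succ,
    eval_zero_betaPoly m s, fun x hx => ?_⟩
  · rw [mul_right_comm, ← pow_mul_eval_betaPoly]
    field_simp
  · rw [hT x hx]
    linear_combination (-((m + 1 + s).choose s : ℝ)) * pow_mul_eval_betaPoly m s x
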